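/- Let I be a finite set of items with a size function s : I → ℝ such that every item has a size in (1/4, 1]. Let P and Q be packings of I into bins of capacity 1 such that every nonempty bin of P and every nonempty bin of Q has one of the types BL, BS, B, LLS, LL, LSS, SSS. Assume P is BS-thorough: for all items b of class B and x of class S with s(b) + s(x) ≤ 1, the bin of b in P has type BL or BS, or the bin of x in P has type BL or BS. Assume further that no bin of Q of type BS contains a B item that lies in a bin of type BL in P. Then N_P(BS) + N_Q(LLS) + 2 * N_Q(LSS) ≥ 3 * (N_P(SSS) - N_Q(SSS)). -/
import Mathlib


open Classical

/-- The set of items that packing `P` assigns to bin `b`. -/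
noncomputable def binOf {ι β : Type*} [Fintype ι] (P : ι → β) (b : β) : Finset ι :=
  Finset.univ.filter (fun i => P i = b)

/-- `P` is a valid packing into bins of capacity 1. -/
def IsPacking {ι β : Type*} [Fintype ι] (s : ι → ℝ) (P : ι → β) : Prop :=
  ∀ b : β, ∑ i ∈ binOf P b, s i ≤ 1

/-- A `B` (big) item has size in `(1/2, 1]`. -/
def isB {ι : Type*} (s : ι → ℝ) (i : ι) : Prop := 1 / 2 < s i ∧ s i ≤ 1

/-- An `L` (large) item has size in `(1/3, 1/2]`. -/
def isL {ι : Type*} (s : ι → ℝ) (i : ι) : Prop := 1 / 3 < s i ∧ s i ≤ 1 / 2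

/-- An `S` (small) item has size in `(1/4, 1/3]`. -/
def isS {ι : Type*} (s : ι → ℝ) (i : ι) : Prop := 1 / 4 < s i ∧ s i ≤ 1 / 3

/-- Bin `b` of packing `P` contains exactly `nb` items of class `B`, `nl` of class `L`,
`ns` of class `S` and nothing else. -/
noncomputable def BinHasType {ι β : Type*} [Fintype ι] (s : ι → ℝ) (P : ι → β) (b : β)
    (nb nl ns : ℕ) : Prop :=
  ((binOf P b).filter (fun i => isB s i)).card = nb ∧
  ((binOf P b).filter (fun i => isL s i)).card = nl ∧
  ((binOf P b).filter (fun i => isS s i)).card = ns ∧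
  (binOf P b).card = nb + nl + ns

/-- Number of bins of packing `P` containing exactly `nb` `B` items, `nl` `L` items and
`ns` `S` items (and nothing else). -/
noncomputable def numBins {ι β : Type*} [Fintype ι] [DecidableEq β] (s : ι → ℝ)
    (P : ι → β) (nb nl ns : ℕ) : ℕ :=
  ((Finset.univ.image P).filter (fun b => BinHasType s P b nb nl ns)).card

lemma sCount {ι γ : Type*} [Fintype ι] [DecidableEq γ] (s : ι → ℝ) (Q : ι → γ)
    (hQtypes : ∀ b : γ, (∃ i, Q i = b) →
      BinHasType s Q b 1 1 0 ∨ BinHasType s Q b 1 0 1 ∨ BinHasType s Q b 1 0 0 ∨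
      BinHasType s Q b 0 2 1 ∨ BinHasType s Q b 0 2 0 ∨ BinHasType s Q b 0 1 2 ∨
      BinHasType s Q b 0 0 3) :
    (Finset.univ.filter (fun i => isS s i)).card =
      numBins s Q 1 0 1 + numBins s Q 0 2 1 + 2 * numBins s Q 0 1 2 +
        3 * numBins s Q 0 0 3 := by
  classical
  set t := Finset.univ.image Q with ht
  have h0 : (Finset.univ.filter (fun i => isS s i)).card =
      ∑ b ∈ t, ((binOf Q b).filter (fun i => isS s i)).card := by
    rw [Finset.card_eq_sum_card_fiberwise (f := Q) (t := t)
      (fun x _ => Finset.mem_image_of_mem _ (Finset.mem_univ x))]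
    refine Finset.sum_congr rfl fun b _ => ?_
    congr 1
    ext i
    simp only [Finset.mem_filter, Finset.mem_univ, binOf, true_and]
    tauto
  have key : ∀ b ∈ t, ((binOf Q b).filter (fun i => isS s i)).card =
      (if BinHasType s Q b 1 0 1 then 1 else 0) +
      (if BinHasType s Q b 0 2 1 then 1 else 0) +
      (if BinHasType s Q b 0 1 2 then 2 else 0) +
      (if BinHasType s Q b 0 0 3 then 3 else 0) := by
    intro b hb
    obtain ⟨i, _, hi⟩ := Finset.mem_image.mp hb
    rcases hQtypes b ⟨i, hi⟩ with h|h|h|h|h|h|h <;>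
      split_ifs with h1 h2 h3 h4 <;>
      simp only [BinHasType] at * <;> omega
  rw [h0, Finset.sum_congr rfl key]
  rw [Finset.sum_add_distrib, Finset.sum_add_distrib, Finset.sum_add_distrib,
    ← Finset.sum_filter, ← Finset.sum_filter, ← Finset.sum_filter, ← Finset.sum_filter]
  simp only [Finset.sum_const, smul_eq_mul, mul_one, numBins]
  ring

lemma bsBound {ι β γ : Type*} [Fintype ι] [DecidableEq β] [DecidableEq γ]
    (s : ι → ℝ)
    (P : ι → β) (Q : ι → γ)
    (hQ : IsPacking s Q)
    (hBSthorough : ∀ bi xi : ι, isB s bi → isS s xi → s bi + s xi ≤ 1 →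
      (BinHasType s P (P bi) 1 1 0 ∨ BinHasType s P (P bi) 1 0 1) ∨
      (BinHasType s P (P xi) 1 1 0 ∨ BinHasType s P (P xi) 1 0 1))
    (hQnorm : ∀ i, isB s i → BinHasType s P (P i) 1 1 0 →
      ¬ BinHasType s Q (Q i) 1 0 1) :
    numBins s Q 1 0 1 ≤ 2 * numBins s P 1 0 1 := by
  classical
  rcases isEmpty_or_nonempty ι with hι | hι
  · have : (Finset.univ.image Q) = ∅ := by simp [Finset.univ_eq_empty]
    simp [numBins, this]
  set TQ := (Finset.univ.image Q).filter (fun c => BinHasType s Q c 1 0 1) with hTQ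
  set TP := (Finset.univ.image P).filter (fun c => BinHasType s P c 1 0 1) with hTP
  have hmain : ∀ c : γ, ∃ bc xc : ι, c ∈ TQ →
      Q bc = c ∧ Q xc = c ∧ isB s bc ∧ isS s xc ∧
      (BinHasType s P (P bc) 1 0 1 ∨ BinHasType s P (P xc) 1 0 1) := by
    intro c
    by_cases hc : c ∈ TQ
    · have h : BinHasType s Q c 1 0 1 := (Finset.mem_filter.mp hc).2
      obtain ⟨bc, hbc⟩ := Finset.card_eq_one.mp h.1
      obtain ⟨xc, hxc⟩ := Finset.card_eq_one.mp h.2.2.1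
      have hbmem : bc ∈ (binOf Q c).filter (fun i => isB s i) := by
        rw [hbc]; exact Finset.mem_singleton_self _
      have hxmem : xc ∈ (binOf Q c).filter (fun i => isS s i) := by
        rw [hxc]; exact Finset.mem_singleton_self _
      have hbB : isB s bc := (Finset.mem_filter.mp hbmem).2
      have hxS : isS s xc := (Finset.mem_filter.mp hxmem).2
      have hbQ : Q bc = c := by
        have := (Finset.mem_filter.mp hbmem).1
        simpa [binOf] using this
      have hxQ : Q xc = c := by
        have := (Finset.mem_filter.mp hxmem).1
        simpa [binOf] using this
      have hbx : bc ≠ xc := by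
        intro he
        have h1 := hbB.1; have h2 := hxS.2
        rw [he] at h1; linarith
      have hsub : ({bc, xc} : Finset ι) ⊆ binOf Q c := by
        intro i hi
        rcases Finset.mem_insert.mp hi with h'|h'
        · subst h'; exact (Finset.mem_filter.mp hbmem).1
        · rw [Finset.mem_singleton.mp h']; exact (Finset.mem_filter.mp hxmem).1
      have hbin : binOf Q c = {bc, xc} := by
        refine (Finset.eq_of_subset_of_card_le hsub ?_).symm
        rw [h.2.2.2, Finset.card_insert_of_notMem (by simpa using hbx),
          Finset.card_singleton]
      have hsum : s bc + s xc ≤ 1 := by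
        have := hQ c
        rw [hbin, Finset.sum_insert (by simpa using hbx), Finset.sum_singleton] at this
        exact this
      refine ⟨bc, xc, fun _ => ⟨hbQ, hxQ, hbB, hxS, ?_⟩⟩
      rcases hBSthorough bc xc hbB hxS hsum with (h'|h') | (h'|h')
      · exact absurd h (by rw [← hbQ] at h ⊢; exact hQnorm bc hbB h')
      · exact Or.inl h'
      · exfalso
        have hm : xc ∈ (binOf P (P xc)).filter (fun i => isS s i) := by
          simp [binOf, hxS]
        rw [Finset.card_eq_zero.mp h'.2.2.1] at hm
        exact absurd hm (Finset.notMem_empty _)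
      · exact Or.inr h'
    · exact ⟨Classical.arbitrary ι, Classical.arbitrary ι, fun h => absurd h hc⟩
  choose bF xF hF using hmain
  set f : γ → β := fun c =>
    if BinHasType s P (P (bF c)) 1 0 1 then P (bF c) else P (xF c) with hf
  have hmaps : ∀ c ∈ TQ, f c ∈ TP := by
    intro c hc
    simp only [hf]
    split_ifs with h'
    · exact Finset.mem_filter.mpr ⟨Finset.mem_image_of_mem _ (Finset.mem_univ _), h'⟩
    · have := (hF c hc).2.2.2.2.resolve_left h'
      exact Finset.mem_filter.mpr ⟨Finset.mem_image_of_mem _ (Finset.mem_univ _), this⟩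
  by_contra hcon
  push_neg at hcon
  have hlt : TP.card * 2 < TQ.card := by
    simpa [numBins, mul_comm] using hcon
  obtain ⟨y, hy, hfib⟩ :=
    Finset.exists_lt_card_fiber_of_mul_lt_card_of_maps_to hmaps hlt
  obtain ⟨c1, c2, c3, hc1, hc2, hc3, h12, h13, h23⟩ :=
    Finset.two_lt_card_iff.mp hfib
  have hyBS : BinHasType s P y 1 0 1 := (Finset.mem_filter.mp hy).2
  -- two Q-bins sharing the B-side item of y coincide
  have hBside : ∀ c c', c ∈ TQ → c' ∈ TQ → P (bF c) = y → P (bF c') = y → c = c' := by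
    intro c c' hc hc' h1 h2
    have hm1 : bF c ∈ (binOf P y).filter (fun i => isB s i) := by
      simp [binOf, (hF c hc).2.2.1, ← h1]
    have hm2 : bF c' ∈ (binOf P y).filter (fun i => isB s i) := by
      simp [binOf, (hF c' hc').2.2.1, ← h2]
    have : bF c = bF c' := Finset.card_le_one.mp (le_of_eq hyBS.1) _ hm1 _ hm2
    rw [← (hF c hc).1, ← (hF c' hc').1, this]
  have hSside : ∀ c c', c ∈ TQ → c' ∈ TQ → P (xF c) = y → P (xF c') = y → c = c' := by
    intro c c' hc hc' h1 h2
    have hm1 : xF c ∈ (binOf P y).filter (fun i => isS s i) := by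
      simp [binOf, (hF c hc).2.2.2.1, ← h1]
    have hm2 : xF c' ∈ (binOf P y).filter (fun i => isS s i) := by
      simp [binOf, (hF c' hc').2.2.2.1, ← h2]
    have : xF c = xF c' := Finset.card_le_one.mp (le_of_eq hyBS.2.2.1) _ hm1 _ hm2
    rw [← (hF c hc).2.1, ← (hF c' hc').2.1, this]
  have hQ1 := Finset.mem_filter.mp hc1
  have hQ2 := Finset.mem_filter.mp hc2
  have hQ3 := Finset.mem_filter.mp hc3
  have hfc : ∀ c, c ∈ TQ.filter (fun x => f x = y) →
      (BinHasType s P (P (bF c)) 1 0 1 ∧ P (bF c) = y) ∨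
      (¬ BinHasType s P (P (bF c)) 1 0 1 ∧ P (xF c) = y) := by
    intro c hc
    obtain ⟨hcT, hcy⟩ := Finset.mem_filter.mp hc
    by_cases h' : BinHasType s P (P (bF c)) 1 0 1
    · exact Or.inl ⟨h', by simp only [hf] at hcy; rwa [if_pos h'] at hcy⟩
    · exact Or.inr ⟨h', by simp only [hf] at hcy; rwa [if_neg h'] at hcy⟩
  have ht1 := hfc c1 hc1
  have ht2 := hfc c2 hc2
  have ht3 := hfc c3 hc3
  have hm1 := (Finset.mem_filter.mp hc1).1
  have hm2 := (Finset.mem_filter.mp hc2).1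
  have hm3 := (Finset.mem_filter.mp hc3).1
  rcases ht1 with ⟨e1, r1⟩ | ⟨e1, r1⟩ <;> rcases ht2 with ⟨e2, r2⟩ | ⟨e2, r2⟩ <;>
    rcases ht3 with ⟨e3, r3⟩ | ⟨e3, r3⟩
  · exact h12 (hBside c1 c2 hm1 hm2 r1 r2)
  · exact h12 (hBside c1 c2 hm1 hm2 r1 r2)
  · exact h13 (hBside c1 c3 hm1 hm3 r1 r3)
  · exact h23 (hSside c2 c3 hm2 hm3 r2 r3)
  · exact h23 (hBside c2 c3 hm2 hm3 r2 r3)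
  · exact h13 (hSside c1 c3 hm1 hm3 r1 r3)
  · exact h12 (hSside c1 c2 hm1 hm2 r1 r2)
  · exact h12 (hSside c1 c2 hm1 hm2 r1 r2)

/-- Lemma 8 of the paper (`N_P(BS) + N_Q(LLS) + 2 N_Q(LSS) ≥ 3 (N_P(SSS) - N_Q(SSS))`). -/
theorem boundS2 {ι β γ : Type*} [Fintype ι] [DecidableEq β] [DecidableEq γ]
    (s : ι → ℝ) (hs : ∀ i, 1 / 4 < s i ∧ s i ≤ 1)
    (P : ι → β) (Q : ι → γ)
    (hP : IsPacking s P) (hQ : IsPacking s Q)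
    (hPtypes : ∀ b : β, (∃ i, P i = b) →
      BinHasType s P b 1 1 0 ∨ BinHasType s P b 1 0 1 ∨ BinHasType s P b 1 0 0 ∨
      BinHasType s P b 0 2 1 ∨ BinHasType s P b 0 2 0 ∨ BinHasType s P b 0 1 2 ∨
      BinHasType s P b 0 0 3)
    (hQtypes : ∀ b : γ, (∃ i, Q i = b) →
      BinHasType s Q b 1 1 0 ∨ BinHasType s Q b 1 0 1 ∨ BinHasType s Q b 1 0 0 ∨
      BinHasType s Q b 0 2 1 ∨ BinHasType s Q b 0 2 0 ∨ BinHasType s Q b 0 1 2 ∨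
      BinHasType s Q b 0 0 3)
    (hBSthorough : ∀ bi xi : ι, isB s bi → isS s xi → s bi + s xi ≤ 1 →
      (BinHasType s P (P bi) 1 1 0 ∨ BinHasType s P (P bi) 1 0 1) ∨
      (BinHasType s P (P xi) 1 1 0 ∨ BinHasType s P (P xi) 1 0 1))
    (hQnorm : ∀ i, isB s i → BinHasType s P (P i) 1 1 0 →
      ¬ BinHasType s Q (Q i) 1 0 1) :
    (numBins s P 1 0 1 : ℤ) + numBins s Q 0 2 1 + 2 * numBins s Q 0 1 2 ≥
      3 * ((numBins s P 0 0 3 : ℤ) - numBins s Q 0 0 3) := by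
  have h1 := sCount s P hPtypes
  have h2 := sCount s Q hQtypes
  have h3 := bsBound s P Q hQ hBSthorough hQnorm
  omega
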